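/- arXiv:1905.05611 — 3 statements merged into one kernel-verified Lean document; each statement's English description precedes it below -/
import Mathlib

section
/- If the underlying probabilities (p_j) are non-decreasing, then the optimal values satisfy V(n) ≤ V(n+1) for all n ≥ 1. -/
/-!
Write `f(k, m) = Q(k, m) R(k, m)` for the value of stopping at the first success among the
indices `k, …, m`. Peeling off one index from either end gives
`f(k, m) = Q(k+1, m) (p_k + q_k R(k+1, m))` and
`f(k, m+1) = Q(k, m) (p_{m+1} + q_{m+1} R(k, m))`, so `f(k, m) ≤ f(k+1, m)` while
`R(k+1, m) ≥ 1`, `f(k, m) ≤ f(k, m+1)` while `R(k, m) ≤ 1`, and, comparing both expansions around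
`Q(s+1, n) R(s+1, n)`, `f(s, n) ≤ f(s+1, n+1)` when `R(s+1, n) ≤ 1` and `p_s ≤ p_{n+1}`.
If `R(1, n) ≤ 1`, then `s(n) = 1` and the second inequality followed by the first gives
`V(n) ≤ f(1, n+1) ≤ V(n+1)`. Otherwise the third one applies to `s = s(n)`, and monotonicity of
the odds `r_j` gives `R(s+1, n+1) ≥ R(s, n) ≥ 1`, so `s + 1 ≤ s(n+1)` and the first inequality
climbs from `f(s+1, n+1)` up to `V(n+1)`.
-/

noncomputable def Rsum (p : ℕ → ℝ) (k n : ℕ) : ℝ := ∑ j ∈ Finset.Icc k n, p j / (1 - p j)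

noncomputable def Qprod (p : ℕ → ℝ) (k n : ℕ) : ℝ := ∏ j ∈ Finset.Icc k n, (1 - p j)

open scoped Classical in
noncomputable def thr (p : ℕ → ℝ) (n : ℕ) : ℕ :=
  if Rsum p 1 n ≤ 1 then 1 else Nat.findGreatest (fun k => 1 ≤ Rsum p k n) n

noncomputable def Val (p : ℕ → ℝ) (n : ℕ) : ℝ := Qprod p (thr p n) n * Rsum p (thr p n) n

noncomputable def stopValue (p : ℕ → ℝ) (k n : ℕ) : ℝ := Qprod p k n * Rsum p k n

section

variable {p : ℕ → ℝ}

lemma div_one_sub_le_div_one_sub {a b : ℝ} (ha : 0 ≤ a) (hab : a ≤ b) (hb : b < 1) :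
    a / (1 - a) ≤ b / (1 - b) :=
  div_le_div₀ (ha.trans hab) hab (by linarith) (by linarith)

lemma Qprod_nonneg (hp1 : ∀ j, p j < 1) (k n : ℕ) : 0 ≤ Qprod p k n :=
  Finset.prod_nonneg fun j _ => by linarith [hp1 j]

lemma Rsum_succ_right {k n : ℕ} (h : k ≤ n + 1) :
    Rsum p k (n + 1) = Rsum p k n + p (n + 1) / (1 - p (n + 1)) :=
  Finset.sum_Icc_succ_top h _

lemma Qprod_succ_right {k n : ℕ} (h : k ≤ n + 1) :
    Qprod p k (n + 1) = Qprod p k n * (1 - p (n + 1)) :=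
  Finset.prod_Icc_succ_top h _

lemma Rsum_eq_add_Rsum_succ {k n : ℕ} (h : k ≤ n) :
    Rsum p k n = p k / (1 - p k) + Rsum p (k + 1) n := by
  rw [Rsum, Rsum, Finset.Icc_eq_cons_Ioc h, Finset.sum_cons, Finset.Icc_add_one_left_eq_Ioc]

lemma Qprod_eq_mul_Qprod_succ {k n : ℕ} (h : k ≤ n) :
    Qprod p k n = (1 - p k) * Qprod p (k + 1) n := by
  rw [Qprod, Qprod, Finset.Icc_eq_cons_Ioc h, Finset.prod_cons, Finset.Icc_add_one_left_eq_Ioc]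

lemma Rsum_eq_zero_of_lt {k n : ℕ} (h : n < k) : Rsum p k n = 0 := by
  rw [Rsum, Finset.Icc_eq_empty_of_lt h, Finset.sum_empty]

lemma Rsum_antitone (hp0 : ∀ j, 0 ≤ p j) (hp1 : ∀ j, p j < 1) (n : ℕ) :
    Antitone fun k => Rsum p k n := fun _ _ h =>
  Finset.sum_le_sum_of_subset_of_nonneg (Finset.Icc_subset_Icc_left h)
    fun j _ _ => div_nonneg (hp0 j) (by linarith [hp1 j])

lemma Rsum_le_Rsum_succ_right (hp0 : ∀ j, 0 ≤ p j) (hp1 : ∀ j, p j < 1) {k n : ℕ}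
    (h : k ≤ n + 1) : Rsum p k n ≤ Rsum p k (n + 1) := by
  rw [Rsum_succ_right h]
  linarith [div_nonneg (hp0 (n + 1)) (by linarith [hp1 (n + 1)] : (0 : ℝ) ≤ 1 - p (n + 1))]

lemma Rsum_le_Rsum_succ_succ (hp0 : ∀ j, 0 ≤ p j) (hp1 : ∀ j, p j < 1) {s n : ℕ}
    (hs : s ≤ n) (hps : p s ≤ p (n + 1)) : Rsum p s n ≤ Rsum p (s + 1) (n + 1) := by
  rw [Rsum_eq_add_Rsum_succ hs, Rsum_succ_right (by omega)]
  linarith [div_one_sub_le_div_one_sub (hp0 s) hps (hp1 (n + 1))]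

lemma stopValue_eq_of_le {k n : ℕ} (h : k ≤ n) (hk : p k ≠ 1) :
    stopValue p k n = Qprod p (k + 1) n * (p k + (1 - p k) * Rsum p (k + 1) n) := by
  have hq : 1 - p k ≠ 0 := sub_ne_zero.2 hk.symm
  rw [stopValue, Qprod_eq_mul_Qprod_succ h, Rsum_eq_add_Rsum_succ h]
  field_simp

lemma stopValue_succ_right {k n : ℕ} (h : k ≤ n + 1) (hn : p (n + 1) ≠ 1) :
    stopValue p k (n + 1) = Qprod p k n * (p (n + 1) + (1 - p (n + 1)) * Rsum p k n) := by
  have hq : 1 - p (n + 1) ≠ 0 := sub_ne_zero.2 hn.symm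
  rw [stopValue, Qprod_succ_right h, Rsum_succ_right h]
  field_simp
  ring

lemma stopValue_le_succ_left (hp0 : ∀ j, 0 ≤ p j) (hp1 : ∀ j, p j < 1) {k n : ℕ} (h : k ≤ n)
    (hR : 1 ≤ Rsum p (k + 1) n) : stopValue p k n ≤ stopValue p (k + 1) n := by
  have key : stopValue p (k + 1) n - stopValue p k n =
      Qprod p (k + 1) n * (p k * (Rsum p (k + 1) n - 1)) := by
    rw [stopValue_eq_of_le h (hp1 k).ne, stopValue]
    ring
  have := mul_nonneg (Qprod_nonneg hp1 (k + 1) n) (mul_nonneg (hp0 k) (sub_nonneg.2 hR))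
  linarith

lemma stopValue_le_succ_right (hp0 : ∀ j, 0 ≤ p j) (hp1 : ∀ j, p j < 1) {k n : ℕ}
    (h : k ≤ n + 1) (hR : Rsum p k n ≤ 1) : stopValue p k n ≤ stopValue p k (n + 1) := by
  have key : stopValue p k (n + 1) - stopValue p k n =
      Qprod p k n * (p (n + 1) * (1 - Rsum p k n)) := by
    rw [stopValue_succ_right h (hp1 (n + 1)).ne, stopValue]
    ring
  have := mul_nonneg (Qprod_nonneg hp1 k n) (mul_nonneg (hp0 (n + 1)) (sub_nonneg.2 hR))
  linarith

lemma stopValue_le_succ_succ (hp1 : ∀ j, p j < 1) {s n : ℕ} (hs : s ≤ n)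
    (hR : Rsum p (s + 1) n ≤ 1) (hps : p s ≤ p (n + 1)) :
    stopValue p s n ≤ stopValue p (s + 1) (n + 1) := by
  have key : stopValue p (s + 1) (n + 1) - stopValue p s n =
      Qprod p (s + 1) n * ((p (n + 1) - p s) * (1 - Rsum p (s + 1) n)) := by
    rw [stopValue_eq_of_le hs (hp1 s).ne, stopValue_succ_right (by omega) (hp1 (n + 1)).ne]
    ring
  have := mul_nonneg (Qprod_nonneg hp1 (s + 1) n)
    (mul_nonneg (sub_nonneg.2 hps) (sub_nonneg.2 hR))
  linarith

lemma stopValue_le_of_one_le_Rsum (hp0 : ∀ j, 0 ≤ p j) (hp1 : ∀ j, p j < 1) {k t n : ℕ}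
    (hkt : k ≤ t) (htn : t ≤ n) (hR : 1 ≤ Rsum p t n) : stopValue p k n ≤ stopValue p t n := by
  induction t, hkt using Nat.le_induction with
  | base => rfl
  | succ t hkt ih =>
    exact (ih (by omega) (hR.trans (Rsum_antitone hp0 hp1 n t.le_succ))).trans
      (stopValue_le_succ_left hp0 hp1 (by omega) hR)

lemma Val_eq_stopValue (n : ℕ) : Val p n = stopValue p (thr p n) n := rfl

lemma thr_of_Rsum_le_one {n : ℕ} (h : Rsum p 1 n ≤ 1) : thr p n = 1 := by
  rw [thr, if_pos h]

open scoped Classical in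
lemma thr_of_one_lt_Rsum {n : ℕ} (h : 1 < Rsum p 1 n) :
    thr p n = Nat.findGreatest (fun k => 1 ≤ Rsum p k n) n := by
  rw [thr, if_neg h.not_ge]

lemma one_le_of_one_lt_Rsum {n : ℕ} (h : 1 < Rsum p 1 n) : 1 ≤ n := by
  by_contra! hn
  rw [Rsum_eq_zero_of_lt hn] at h
  norm_num at h

lemma le_thr {k n : ℕ} (h : 1 < Rsum p 1 n) (hkn : k ≤ n) (hk : 1 ≤ Rsum p k n) :
    k ≤ thr p n := by
  classical
  rw [thr_of_one_lt_Rsum h]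
  exact Nat.le_findGreatest hkn hk

lemma one_le_thr (n : ℕ) : 1 ≤ thr p n := by
  by_cases h : Rsum p 1 n ≤ 1
  · rw [thr_of_Rsum_le_one h]
  · exact le_thr (not_le.1 h) (one_le_of_one_lt_Rsum (not_le.1 h)) (not_le.1 h).le

lemma thr_le {n : ℕ} (h : 1 < Rsum p 1 n) : thr p n ≤ n := by
  classical
  rw [thr_of_one_lt_Rsum h]
  exact Nat.findGreatest_le n

lemma one_le_Rsum_thr {n : ℕ} (h : 1 < Rsum p 1 n) : 1 ≤ Rsum p (thr p n) n := by
  classical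
  rw [thr_of_one_lt_Rsum h]
  exact Nat.findGreatest_spec (P := fun k => 1 ≤ Rsum p k n) (one_le_of_one_lt_Rsum h) h.le

lemma Rsum_succ_thr_lt_one {n : ℕ} (h : 1 < Rsum p 1 n) : Rsum p (thr p n + 1) n < 1 := by
  classical
  rcases (thr_le h).lt_or_eq with hlt | heq
  · rw [thr_of_one_lt_Rsum h] at hlt ⊢
    exact not_le.1 (Nat.findGreatest_is_greatest (Nat.lt_succ_self _) hlt)
  · rw [heq, Rsum_eq_zero_of_lt n.lt_succ_self]
    exact one_pos

lemma stopValue_le_Val (hp0 : ∀ j, 0 ≤ p j) (hp1 : ∀ j, p j < 1) {k n : ℕ} (hk : 1 ≤ k)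
    (hkt : k ≤ thr p n) : stopValue p k n ≤ Val p n := by
  by_cases h : Rsum p 1 n ≤ 1
  · rw [Val_eq_stopValue, le_antisymm (thr_of_Rsum_le_one h ▸ hkt) hk, thr_of_Rsum_le_one h]
  · rw [not_le] at h
    exact stopValue_le_of_one_le_Rsum hp0 hp1 hkt (thr_le h) (one_le_Rsum_thr h)

end

theorem stmt_7_general (p : ℕ → ℝ) (hp0 : ∀ j, 0 ≤ p j) (hp1 : ∀ j, p j < 1)
    (hmono : ∀ j, p j ≤ p (j + 1)) (n : ℕ) :
    Val p n ≤ Val p (n + 1) := by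
  by_cases h : Rsum p 1 n ≤ 1
  · calc Val p n = stopValue p 1 n := by rw [Val_eq_stopValue, thr_of_Rsum_le_one h]
      _ ≤ stopValue p 1 (n + 1) := stopValue_le_succ_right hp0 hp1 (by omega) h
      _ ≤ Val p (n + 1) := stopValue_le_Val hp0 hp1 le_rfl (one_le_thr _)
  · rw [not_le] at h
    set s := thr p n
    have hsn : s ≤ n := thr_le h
    have hps : p s ≤ p (n + 1) := monotone_nat_of_le_succ hmono (by omega)
    have hR : 1 ≤ Rsum p (s + 1) (n + 1) :=
      (one_le_Rsum_thr h).trans (Rsum_le_Rsum_succ_succ hp0 hp1 hsn hps)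
    have h' : 1 < Rsum p 1 (n + 1) := h.trans_le (Rsum_le_Rsum_succ_right hp0 hp1 (by omega))
    calc Val p n = stopValue p s n := Val_eq_stopValue n
      _ ≤ stopValue p (s + 1) (n + 1) :=
        stopValue_le_succ_succ hp1 hsn (Rsum_succ_thr_lt_one h).le hps
      _ ≤ Val p (n + 1) := stopValue_le_Val hp0 hp1 (by omega) (le_thr h' (by omega) hR)

theorem stmt_7 (p : ℕ → ℝ) (hp0 : ∀ j, 0 ≤ p j) (hp1 : ∀ j, p j < 1)
    (hmono : ∀ j, p j ≤ p (j + 1)) (n : ℕ) (hn : 1 ≤ n) :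
    Val p n ≤ Val p (n + 1) :=
  stmt_7_general p hp0 hp1 hmono n
end

section
/- For fixed n, two consecutive thresholds s−1 and s both attain the optimal value, i.e. Q(s−1,n)·R(s−1,n) = Q(s,n)·R(s,n), if and only if R(s,n) = 1, provided 0 < p_{s−1} < 1. -/
/-! Moving the threshold from `k + 1` down to `k` multiplies `Q` by `q_k` and adds `r_k` to `R`,
so `Q(k,n) R(k,n) = Q(k+1,n) (p_k + q_k R(k+1,n))`. This is a convex combination of
`Q(k+1,n)` and `Q(k+1,n) R(k+1,n)` with weight `p_k ∈ (0,1)` on the first, hence it equals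
`Q(k+1,n) R(k+1,n)` exactly when `R(k+1,n) = 1`. -/

theorem Qprod_eq_mul_Qprod_add_one (p : ℕ → ℝ) {k n : ℕ} (hkn : k ≤ n) :
    Qprod p k n = (1 - p k) * Qprod p (k + 1) n := by
  rw [Qprod, Qprod, ← Finset.insert_Icc_add_one_left_eq_Icc hkn,
    Finset.prod_insert (by simp)]

theorem Rsum_eq_add_Rsum_add_one (p : ℕ → ℝ) {k n : ℕ} (hkn : k ≤ n) :
    Rsum p k n = p k / (1 - p k) + Rsum p (k + 1) n := by
  rw [Rsum, Rsum, ← Finset.insert_Icc_add_one_left_eq_Icc hkn,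
    Finset.sum_insert (by simp)]

theorem Qprod_pos (p : ℕ → ℝ) (k n : ℕ) (hp1 : ∀ j, j ≤ n → p j < 1) : 0 < Qprod p k n :=
  Finset.prod_pos fun j hj => sub_pos.mpr (hp1 j (Finset.mem_Icc.mp hj).2)

theorem mul_mul_div_add_eq_mul_iff {a Q R : ℝ} (ha0 : a ≠ 0) (ha1 : a ≠ 1) (hQ : Q ≠ 0) :
    (1 - a) * Q * (a / (1 - a) + R) = Q * R ↔ R = 1 := by
  have hq : 1 - a ≠ 0 := sub_ne_zero.mpr (Ne.symm ha1)
  have expand : (1 - a) * Q * (a / (1 - a) + R) = Q * R + Q * a * (1 - R) := by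
    field_simp
    ring
  rw [expand, add_eq_left, mul_eq_zero, mul_eq_zero, sub_eq_zero, eq_comm]
  tauto

theorem stmt_9_general (p : ℕ → ℝ) (n s : ℕ) (hs : 1 < s) (hsn : s ≤ n)
    (hp1 : ∀ j, j ≤ n → p j < 1)
    (hps : 0 < p (s - 1)) :
    Qprod p (s - 1) n * Rsum p (s - 1) n = Qprod p s n * Rsum p s n ↔ Rsum p s n = 1 := by
  obtain ⟨k, rfl⟩ : ∃ k, s = k + 1 := ⟨s - 1, by omega⟩
  rw [Nat.add_sub_cancel] at hps ⊢
  rw [Qprod_eq_mul_Qprod_add_one p (by omega), Rsum_eq_add_Rsum_add_one p (by omega)]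
  exact mul_mul_div_add_eq_mul_iff hps.ne' (hp1 k (by omega)).ne (Qprod_pos p _ n hp1).ne'

theorem stmt_9 (p : ℕ → ℝ) (n s : ℕ) (hs : 1 < s) (hsn : s ≤ n)
    (hp0 : ∀ j, j ≤ n → 0 ≤ p j) (hp1 : ∀ j, j ≤ n → p j < 1)
    (hps : 0 < p (s - 1)) :
    Qprod p (s - 1) n * Rsum p (s - 1) n = Qprod p s n * Rsum p s n ↔ Rsum p s n = 1 :=
  stmt_9_general p n s hs hsn hp1 hps
end

section
/- In the classical secretary problem, the optimal win probability V(n) = Q(s(n),n)·R(s(n),n) (with p_j = 1/j) is strictly decreasing in n for n ≥ 3. -/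
/-!
`winProb p k n = Q(k,n) R(k,n)` is the success probability of the rule that stops at the first
success from index `k` on, so `Val p n = winProb p (s n) n`. For every `p`,
  `winProb k n - winProb k (n+1) = Q(k,n) p_{n+1} (R(k,n) - 1)` and
  `winProb k n - winProb (k+1) (n+1) = Q(k+1,n) (p_k - p_{n+1}) (1 - R(k+1,n))`.
At the threshold `s = s(n)` we have `R(s,n) ≥ 1 > R(s+1,n)`, and for `p_j = 1/j` the next threshold
`s(n+1)` is `s` or `s+1`. In the second case the second identity is positive because `p` is
strictly decreasing. In the first case the first identity is positive because
`R(s,n) = H_{n-1} - H_{s-2}` is not `1`: a difference `H_b - H_c` of harmonic numbers is 2-adically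
larger than `1` when `b` has more binary digits than `c`, and smaller than `1` as a real number
when they have the same number of binary digits.
-/

open Finset

theorem harmonic_sub_harmonic_eq_sum_Ioc {b c : ℕ} (hcb : c ≤ b) :
    harmonic b - harmonic c = ∑ i ∈ Ioc c b, (i : ℚ)⁻¹ := by
  rw [harmonic_eq_sum_Icc, harmonic_eq_sum_Icc, ← zero_add 1, Icc_add_one_left_eq_Ioc,
    Icc_add_one_left_eq_Ioc, ← sum_Ioc_consecutive _ c.zero_le hcb, add_sub_cancel_left]

theorem harmonic_sub_harmonic_ne_one {b c : ℕ} (hcb : c < b) (hb : 2 ≤ b) :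
    harmonic b - harmonic c ≠ 1 := by
  intro h
  rcases (Nat.log_mono_right hcb.le).lt_or_eq with hlog | hlog
  · -- `‖H_b‖₂ = 2 ^ log₂ b` exceeds `max ‖H_c‖₂ ‖1‖₂ ≤ 2 ^ log₂ c`.
    have hultra : ‖(harmonic b : ℚ_[2])‖ ≤ max ‖(harmonic c : ℚ_[2])‖ ‖(1 : ℚ_[2])‖ := by
      rw [show harmonic b = harmonic c + 1 by linarith, Rat.cast_add, Rat.cast_one]
      exact Padic.nonarchimedean _ _
    have hc : ‖(harmonic c : ℚ_[2])‖ ≤ 2 ^ Nat.log 2 c := by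
      rcases eq_or_ne c 0 with rfl | hc
      · simp
      · exact (padicNorm_two_harmonic hc).le
    rw [padicNorm_two_harmonic (by omega), norm_one] at hultra
    have := hultra.trans (max_le hc (one_le_pow₀ one_le_two))
    exact hlog.not_ge ((pow_le_pow_iff_right₀ one_lt_two).1 this)
  · -- Now `b < 2c`, so `H_b - H_c` has fewer than `c + 1` terms, each at most `1 / (c + 1)`.
    have hc : c ≠ 0 := by
      rintro rfl
      have := Nat.lt_pow_succ_log_self one_lt_two b
      rw [← hlog, Nat.log_zero_right] at this
      omega
    have hbc : b < 2 * c := calc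
      b < 2 ^ (Nat.log 2 b + 1) := Nat.lt_pow_succ_log_self one_lt_two b
      _ = 2 * 2 ^ Nat.log 2 c := by rw [hlog, pow_succ, mul_comm]
      _ ≤ 2 * c := by gcongr; exact Nat.pow_log_le_self 2 hc
    have : ∑ i ∈ Ioc c b, (i : ℚ)⁻¹ ≤ (b - c : ℕ) • ((c + 1 : ℕ) : ℚ)⁻¹ := by
      rw [← Nat.card_Ioc]
      refine sum_le_card_nsmul _ _ _ fun i hi => ?_
      have := (mem_Ioc.1 hi).1
      gcongr
      exact_mod_cast this
    rw [← harmonic_sub_harmonic_eq_sum_Ioc hcb.le, h, nsmul_eq_mul] at this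
    have hc' : (0 : ℚ) < (c + 1 : ℕ) := by positivity
    rw [← div_eq_mul_inv, le_div_iff₀ hc', one_mul] at this
    have : (c + 1 : ℕ) ≤ (b - c : ℕ) := by exact_mod_cast this
    omega

namespace Secretary

noncomputable def winProb (p : ℕ → ℝ) (k n : ℕ) : ℝ := Qprod p k n * Rsum p k n

section General

variable (p : ℕ → ℝ) {k n : ℕ}

theorem Val_eq_winProb : Val p n = winProb p (thr p n) n := rfl

theorem Rsum_of_lt (h : n < k) : Rsum p k n = 0 := by
  rw [Rsum, Icc_eq_empty_of_lt h, sum_empty]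

theorem Rsum_succ_right (h : k ≤ n + 1) :
    Rsum p k (n + 1) = Rsum p k n + p (n + 1) / (1 - p (n + 1)) :=
  sum_Icc_succ_top h _

theorem Qprod_succ_right (h : k ≤ n + 1) :
    Qprod p k (n + 1) = Qprod p k n * (1 - p (n + 1)) :=
  prod_Icc_succ_top h _

theorem Rsum_eq_add_Rsum_succ (h : k ≤ n) :
    Rsum p k n = p k / (1 - p k) + Rsum p (k + 1) n := by
  rw [Rsum, Rsum, Icc_add_one_left_eq_Ioc]
  exact (add_sum_Ioc_eq_sum_Icc (f := fun j => p j / (1 - p j)) h).symm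

theorem Qprod_eq_mul_Qprod_succ (h : k ≤ n) :
    Qprod p k n = (1 - p k) * Qprod p (k + 1) n := by
  rw [Qprod, Qprod, Icc_add_one_left_eq_Ioc]
  exact (mul_prod_Ioc_eq_prod_Icc (f := fun j => 1 - p j) h).symm

theorem Qprod_pos (h : ∀ j ∈ Icc k n, p j < 1) : 0 < Qprod p k n :=
  prod_pos fun j hj => sub_pos.2 (h j hj)

theorem winProb_sub_winProb_succ_right (h : k ≤ n + 1) (hpn : p (n + 1) ≠ 1) :
    winProb p k n - winProb p k (n + 1) = Qprod p k n * p (n + 1) * (Rsum p k n - 1) := by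
  have : 1 - p (n + 1) ≠ 0 := sub_ne_zero.2 hpn.symm
  rw [winProb, winProb, Rsum_succ_right p h, Qprod_succ_right p h]
  field_simp
  ring

theorem winProb_sub_winProb_succ_succ (h : k ≤ n) (hpk : p k ≠ 1) (hpn : p (n + 1) ≠ 1) :
    winProb p k n - winProb p (k + 1) (n + 1) =
      Qprod p (k + 1) n * (p k - p (n + 1)) * (1 - Rsum p (k + 1) n) := by
  have : 1 - p k ≠ 0 := sub_ne_zero.2 hpk.symm
  have : 1 - p (n + 1) ≠ 0 := sub_ne_zero.2 hpn.symm
  rw [winProb, winProb, Rsum_succ_right p (by omega), Qprod_succ_right p (by omega),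
    Rsum_eq_add_Rsum_succ p h, Qprod_eq_mul_Qprod_succ p h]
  field_simp
  ring

theorem thr_spec (h : 1 < Rsum p 1 n) :
    thr p n ≤ n ∧ 1 ≤ Rsum p (thr p n) n ∧ Rsum p (thr p n + 1) n < 1 := by
  have hn : 1 ≤ n := by
    by_contra! hn
    rw [Rsum_of_lt p hn] at h
    linarith
  rw [thr, if_neg h.not_ge]
  refine ⟨Nat.findGreatest_le n, Nat.findGreatest_spec (P := (1 ≤ Rsum p · n)) hn h.le, ?_⟩
  rcases (Nat.findGreatest_le (P := (1 ≤ Rsum p · n)) n).lt_or_eq with hlt | heq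
  · exact not_le.1 (Nat.findGreatest_is_greatest (Nat.lt_succ_self _) hlt)
  · rw [heq, Rsum_of_lt p n.lt_succ_self]
    exact one_pos

variable {p} (hp0 : ∀ j, 0 ≤ p j) (hp1 : ∀ j, p j ≤ 1)
include hp0 hp1

theorem odds_nonneg (j : ℕ) : 0 ≤ p j / (1 - p j) :=
  div_nonneg (hp0 j) (sub_nonneg.2 (hp1 j))

theorem Rsum_nonneg : 0 ≤ Rsum p k n :=
  sum_nonneg fun j _ => odds_nonneg hp0 hp1 j

theorem Rsum_antitone (n : ℕ) : Antitone (Rsum p · n) := fun _ _ h =>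
  sum_le_sum_of_subset_of_nonneg (Icc_subset_Icc_left h) fun j _ _ => odds_nonneg hp0 hp1 j

theorem Rsum_le_Rsum_succ_right (h : k ≤ n + 1) : Rsum p k n ≤ Rsum p k (n + 1) := by
  rw [Rsum_succ_right p h]
  exact le_add_of_nonneg_right (odds_nonneg hp0 hp1 _)

theorem thr_eq_of_le_of_lt (h : 1 < Rsum p 1 n) (hk : 1 ≤ Rsum p k n)
    (hk' : Rsum p (k + 1) n < 1) : thr p n = k := by
  obtain ⟨-, hs, hs'⟩ := thr_spec p h
  have anti := Rsum_antitone hp0 hp1 n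
  refine le_antisymm (not_lt.1 fun hlt => ?_) (not_lt.1 fun hlt => ?_)
  · exact (hk'.trans_le hs).not_ge (anti (Nat.succ_le_of_lt hlt))
  · exact (hs'.trans_le hk).not_ge (anti (Nat.succ_le_of_lt hlt))

end General

section Classical

variable {p : ℕ → ℝ} (hp : ∀ j, p j = 1 / j) {k n : ℕ}
include hp

theorem classical_nonneg (j : ℕ) : 0 ≤ p j := by
  rw [hp]
  positivity

theorem classical_le_one (j : ℕ) : p j ≤ 1 := by
  rw [hp]
  rcases j.eq_zero_or_pos with rfl | hj
  · simp
  · exact div_le_one_of_le₀ (by exact_mod_cast hj) (Nat.cast_nonneg j)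

theorem classical_pos {j : ℕ} (hj : 1 ≤ j) : 0 < p j := by
  rw [hp]
  positivity

theorem classical_lt_one {j : ℕ} (hj : 2 ≤ j) : p j < 1 := by
  rw [hp, div_lt_one (by positivity)]
  exact_mod_cast hj

theorem classical_lt_of_lt {i j : ℕ} (hi : 1 ≤ i) (hij : i < j) : p j < p i := by
  rw [hp, hp]
  gcongr

theorem classical_Qprod_pos (hk : 2 ≤ k) : 0 < Qprod p k n :=
  Qprod_pos p fun _ hj => classical_lt_one hp (hk.trans (mem_Icc.1 hj).1)

-- At `m = 0` both sides are `0`, by the convention `x / 0 = 0`.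
theorem classical_odds_succ (m : ℕ) : p (m + 1) / (1 - p (m + 1)) = (m : ℝ)⁻¹ := by
  rw [hp]
  rcases m.eq_zero_or_pos with rfl | hm
  · simp
  · have : (m : ℝ) ≠ 0 := by positivity
    push_cast
    field_simp
    rw [add_sub_cancel_right, div_self this]

theorem classical_Rsum_eq_harmonic (hk : 2 ≤ k) (hkn : k ≤ n + 1) :
    Rsum p k n = ((harmonic (n - 1) - harmonic (k - 2) : ℚ) : ℝ) := by
  obtain ⟨c, rfl⟩ := Nat.exists_eq_add_of_le' hk
  obtain ⟨d, rfl⟩ := Nat.exists_eq_add_of_le (show c + 1 ≤ n by omega)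
  induction d with
  | zero => simp [Rsum_of_lt p (show c + 1 < c + 2 by omega)]
  | succ d ih =>
    rw [← add_assoc, Rsum_succ_right p (by omega), ih (by omega), classical_odds_succ hp,
      show c + 1 + d + 1 - 1 = c + d + 1 by omega, show c + 1 + d - 1 = c + d by omega,
      harmonic_succ]
    push_cast
    ring_nf

theorem classical_Rsum_ne_one (hk : 2 ≤ k) (hkn : k ≤ n) (hn : 3 ≤ n) : Rsum p k n ≠ 1 := by
  rw [classical_Rsum_eq_harmonic hp hk (by omega)]
  exact_mod_cast harmonic_sub_harmonic_ne_one (by omega) (by omega)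

theorem classical_one_le_Rsum_two (hn : 2 ≤ n) : 1 ≤ Rsum p 2 n := by
  rw [Rsum_eq_add_Rsum_succ p hn, classical_odds_succ hp 1, Nat.cast_one, inv_one]
  exact le_add_of_nonneg_right (Rsum_nonneg (classical_nonneg hp) (classical_le_one hp))

theorem classical_one_lt_Rsum_one (hn : 3 ≤ n) : 1 < Rsum p 1 n := by
  rw [Rsum_eq_add_Rsum_succ p (by omega), Rsum_eq_add_Rsum_succ p (by omega),
    Rsum_eq_add_Rsum_succ p hn, classical_odds_succ hp 0, classical_odds_succ hp 1,
    classical_odds_succ hp 2]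
  have := Rsum_nonneg (k := 3 + 1) (n := n) (classical_nonneg hp) (classical_le_one hp)
  norm_num
  linarith

theorem classical_two_le_thr (hn : 3 ≤ n) : 2 ≤ thr p n := by
  obtain ⟨-, -, hs'⟩ := thr_spec p (classical_one_lt_Rsum_one hp hn)
  by_contra! hs
  have : Rsum p 2 n ≤ Rsum p (thr p n + 1) n :=
    Rsum_antitone (classical_nonneg hp) (classical_le_one hp) n (by omega)
  linarith [classical_one_le_Rsum_two hp (n := n) (by omega)]

theorem classical_Rsum_succ_succ_le (hk : 1 ≤ k) (hkn : k ≤ n) :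
    Rsum p (k + 2) (n + 1) ≤ Rsum p (k + 1) n := by
  have h := Rsum_succ_right p (k := k + 1) (n := n) (by omega)
  rw [Rsum_eq_add_Rsum_succ p (by omega), classical_odds_succ hp, classical_odds_succ hp] at h
  have : (n : ℝ)⁻¹ ≤ (k : ℝ)⁻¹ := by gcongr
  linarith

end Classical

end Secretary

open Secretary

theorem stmt_16 (p : ℕ → ℝ) (hp : ∀ j, p j = 1 / j) (n : ℕ) (hn : 3 ≤ n) :
    Val p (n + 1) < Val p n := by
  have hp0 := classical_nonneg hp
  have hp1 := classical_le_one hp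
  obtain ⟨hsn, hRs, hRs'⟩ := thr_spec p (classical_one_lt_Rsum_one hp hn)
  have hs := classical_two_le_thr hp hn
  set s := thr p n
  have hthr : ∀ k, 1 ≤ Rsum p k (n + 1) → Rsum p (k + 1) (n + 1) < 1 → thr p (n + 1) = k :=
    fun _ => thr_eq_of_le_of_lt hp0 hp1 (classical_one_lt_Rsum_one hp (by omega))
  rw [Val_eq_winProb, Val_eq_winProb, ← sub_pos]
  rcases le_or_gt 1 (Rsum p (s + 1) (n + 1)) with h | h
  · rw [hthr _ h ((classical_Rsum_succ_succ_le hp (by omega) hsn).trans_lt hRs'),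
      winProb_sub_winProb_succ_succ p hsn (classical_lt_one hp hs).ne
        (classical_lt_one hp (by omega)).ne]
    have := classical_Qprod_pos hp (n := n) (show 2 ≤ s + 1 by omega)
    have := classical_lt_of_lt hp (by omega) (show s < n + 1 by omega)
    have : 0 < 1 - Rsum p (s + 1) n := by linarith
    positivity
  · rw [hthr _ (hRs.trans (Rsum_le_Rsum_succ_right hp0 hp1 (by omega))) h,
      winProb_sub_winProb_succ_right p (by omega) (classical_lt_one hp (by omega)).ne]
    have := classical_Qprod_pos hp (n := n) hs
    have := classical_pos hp (show 1 ≤ n + 1 by omega)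
    have : 0 < Rsum p s n - 1 :=
      sub_pos.2 (lt_of_le_of_ne hRs (classical_Rsum_ne_one hp hs hsn hn).symm)
    positivity
end
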